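/- Let R be a commutative ring, let f = (f₁,…,f_r) and g = (g₁,…,g_r) be two regular sequences in R generating the same ideal I = (f₁,…,f_r) = (g₁,…,g_r), and let A = (a_{ij}) be an r×r matrix over R with gᵢ = Σⱼ a_{ij}fⱼ for every i. Then for every prime ideal p of R with I ⊆ p, the determinant det(A) does not belong to p; in particular, det(A) becomes a unit in the localization R_p for every prime p containing I. -/

import Mathlib

/-!
Choose `B` with `f = B g`. Then `B A` fixes the vector `f`, so every row of `B A - 1` is a
relation among `f₁, …, f_r`. For a (weakly) regular sequence every relation has its
coefficients in `I = (f₁, …, f_r)`: peel off `f_r`, which is a nonzerodivisor modulo the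
earlier ones, and absorb it into the remaining coefficients. Hence `B A ≡ 1` modulo `I`, so
`det A` is a unit in `R ⧸ I` and lies in no prime containing `I`.
-/

open RingTheory.Sequence Matrix

namespace Ideal

variable {R M : Type*} [CommRing R] [AddCommGroup M] [Module R M]

theorem ofList_ofFn {n : ℕ} (f : Fin n → R) : ofList (List.ofFn f) = span (Set.range f) :=
  congrArg span (Set.ext fun _ => List.mem_ofFn)

theorem mem_span_range_smul_top_iff {ι : Type*} [Fintype ι] (f : ι → R) (x : M) :
    x ∈ span (Set.range f) • (⊤ : Submodule R M) ↔ ∃ m : ι → M, ∑ i, f i • m i = x := by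
  constructor
  · intro hx
    refine Submodule.smul_induction_on hx (fun r hr y _ => ?_) ?_
    · obtain ⟨c, rfl⟩ := mem_span_range_iff_exists_fun.mp hr
      exact ⟨fun i => c i • y, by simp only [Finset.sum_smul, smul_smul, mul_comm]⟩
    · rintro _ _ ⟨m, rfl⟩ ⟨m', rfl⟩
      exact ⟨m + m', by simp only [Pi.add_apply, smul_add, Finset.sum_add_distrib]⟩
  · rintro ⟨m, rfl⟩
    exact Submodule.sum_mem _ fun i _ =>
      Submodule.smul_mem_smul (subset_span ⟨i, rfl⟩) Submodule.mem_top

end Ideal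

namespace RingTheory.Sequence.IsWeaklyRegular

variable {R M : Type*} [CommRing R] [AddCommGroup M] [Module R M] {n : ℕ} {f : Fin n → R}

theorem mem_span_smul_top_of_sum_smul_eq_zero
    (hf : IsWeaklyRegular M (List.ofFn f)) {m : Fin n → M} (hm : ∑ i, f i • m i = 0)
    (i : Fin n) : m i ∈ Ideal.span (Set.range f) • (⊤ : Submodule R M) := by
  induction n with
  | zero => exact i.elim0
  | succ n ih =>
    set f' : Fin n → R := fun j => f j.castSucc
    set N := Ideal.span (Set.range f') • (⊤ : Submodule R M)
    rw [List.ofFn_succ', List.concat_eq_append, isWeaklyRegular_append_iff,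
      isWeaklyRegular_singleton_iff, Ideal.ofList_ofFn] at hf
    obtain ⟨hf', hlast⟩ := hf
    rw [Fin.sum_univ_castSucc] at hm
    have hsmul : f (Fin.last n) • m (Fin.last n) ∈ N := by
      rw [eq_neg_of_add_eq_zero_right hm, neg_mem_iff, Ideal.mem_span_range_smul_top_iff]
      exact ⟨_, rfl⟩
    have hlast_mem : m (Fin.last n) ∈ N := by
      rw [← Submodule.Quotient.mk_eq_zero]
      refine hlast.right_eq_zero_of_smul ?_
      rwa [← Submodule.Quotient.mk_smul, Submodule.Quotient.mk_eq_zero]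
    obtain ⟨k, hk⟩ := (Ideal.mem_span_range_smul_top_iff f' _).mp hlast_mem
    have hrel : ∑ j, f' j • (m j.castSucc + f (Fin.last n) • k j) = 0 := by
      simp only [smul_add, Finset.sum_add_distrib, smul_comm (f' _) (f (Fin.last n)),
        ← Finset.smul_sum, hk]
      exact hm
    have hN : N ≤ Ideal.span (Set.range f) • (⊤ : Submodule R M) :=
      Submodule.smul_mono_left (Ideal.span_mono (Set.range_comp_subset_range _ _))
    refine Fin.lastCases (hN hlast_mem) (fun j => ?_) i
    rw [← add_sub_cancel_right (m j.castSucc) (f (Fin.last n) • k j)]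
    exact sub_mem (hN (ih hf' hrel j))
      (Submodule.smul_mem_smul (Ideal.subset_span ⟨_, rfl⟩) Submodule.mem_top)

theorem mem_span_of_dotProduct_eq_zero (hf : IsWeaklyRegular R (List.ofFn f)) {c : Fin n → R}
    (hc : c ⬝ᵥ f = 0) (i : Fin n) : c i ∈ Ideal.span (Set.range f) := by
  have := hf.mem_span_smul_top_of_sum_smul_eq_zero (m := c)
    (by simpa only [dotProduct, smul_eq_mul, mul_comm] using hc) i
  rwa [smul_eq_mul, Ideal.mul_top] at this

theorem map_mk_eq_one_of_mulVec_eq_self (hf : IsWeaklyRegular R (List.ofFn f))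
    {C : Matrix (Fin n) (Fin n) R} (hC : C *ᵥ f = f) :
    C.map (Ideal.Quotient.mk (Ideal.span (Set.range f))) = 1 := by
  have hrel : (C - 1) *ᵥ f = 0 := by rw [sub_mulVec, one_mulVec, hC, sub_self]
  ext i j
  rw [← Matrix.map_one (Ideal.Quotient.mk (Ideal.span (Set.range f))) (map_zero _) (map_one _),
    Matrix.map_apply, Matrix.map_apply, Ideal.Quotient.eq]
  exact hf.mem_span_of_dotProduct_eq_zero (congrFun hrel i) j

theorem isUnit_mk_det_of_mulVec_eq (hf : IsWeaklyRegular R (List.ofFn f)) {g : Fin n → R}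
    (hfg : Ideal.span (Set.range f) ≤ Ideal.span (Set.range g))
    {A : Matrix (Fin n) (Fin n) R} (hA : A *ᵥ f = g) :
    IsUnit (Ideal.Quotient.mk (Ideal.span (Set.range f)) A.det) := by
  have hB : ∀ i, ∃ b : Fin n → R, b ⬝ᵥ g = f i := fun i =>
    Ideal.mem_span_range_iff_exists_fun.mp (hfg (Ideal.subset_span ⟨i, rfl⟩))
  choose B hB using hB
  have hBA := hf.map_mk_eq_one_of_mulVec_eq_self (C := Matrix.of B * A)
    (by rw [← mulVec_mulVec, hA]; exact funext hB)
  rw [RingHom.map_det]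
  exact isUnit_det_of_left_inverse (by rwa [RingHom.mapMatrix_apply, ← Matrix.map_mul])

end RingTheory.Sequence.IsWeaklyRegular

theorem det_transition_matrix_not_mem_prime_general
    {R : Type*} [CommRing R] {r : ℕ} (f g : Fin r → R)
    (hf : RingTheory.Sequence.IsRegular R (List.ofFn f))
    (hI : Ideal.span (Set.range f) = Ideal.span (Set.range g))
    (A : Matrix (Fin r) (Fin r) R)
    (hA : ∀ i, g i = ∑ j, A i j * f j) :
    ∀ (p : Ideal R) [p.IsPrime], Ideal.span (Set.range f) ≤ p →
      A.det ∉ p ∧ IsUnit (algebraMap R (Localization.AtPrime p) A.det) := by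
  intro p _ hIp
  have hunit := hf.toIsWeaklyRegular.isUnit_mk_det_of_mulVec_eq hI.le (A := A)
    (funext fun i => (hA i).symm)
  have hdet : A.det ∉ p := fun hp => by
    have := hunit.map (Ideal.Quotient.factor hIp)
    rw [Ideal.Quotient.factor_mk, Ideal.Quotient.eq_zero_iff_mem.mpr hp] at this
    exact not_isUnit_zero this
  exact ⟨hdet, (IsLocalization.AtPrime.isUnit_to_map_iff _ p _).mpr hdet⟩

/-- If `f₁, …, f_r` and `g₁, …, g_r` are regular sequences in a commutative ring `R`
generating the same ideal `I`, and `A` is an `r × r` matrix with `gᵢ = Σⱼ a_{ij}fⱼ`,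
then `det A` lies in no prime ideal containing `I`; in particular `det A` becomes a
unit in the localization at every prime containing `I`. -/
theorem det_transition_matrix_not_mem_prime
    {R : Type*} [CommRing R] {r : ℕ} (f g : Fin r → R)
    (hf : RingTheory.Sequence.IsRegular R (List.ofFn f))
    (hg : RingTheory.Sequence.IsRegular R (List.ofFn g))
    (hI : Ideal.span (Set.range f) = Ideal.span (Set.range g))
    (A : Matrix (Fin r) (Fin r) R)
    (hA : ∀ i, g i = ∑ j, A i j * f j) :
    ∀ (p : Ideal R) [p.IsPrime], Ideal.span (Set.range f) ≤ p →
      A.det ∉ p ∧ IsUnit (algebraMap R (Localization.AtPrime p) A.det) :=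
  det_transition_matrix_not_mem_prime_general f g hf hI A hA
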